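/- Let M be the set of fixed-point-free involutions in the symmetric group on the set {1, 2, 3, 4, 5, 6} (M has exactly 15 elements), and let the subgroup H of S₆ generated by the permutations (3 5 4 6), (1 2)(5 6) and (1 4)(2 3)(5 6) act on M by conjugation. Then this action has exactly 4 orbits, of sizes 1, 4, 4 and 6. -/

import Mathlib

/-- The set of fixed-point-free involutions of `{1,…,6}` (realized on `Fin 6`). -/
def FPFInv : Set (Equiv.Perm (Fin 6)) := {σ | σ * σ = 1 ∧ ∀ i, σ i ≠ i}

/-- The subgroup of `S₆` generated by `(3 5 4 6)`, `(1 2)(5 6)` and `(1 4)(2 3)(5 6)`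
(zero-indexed on `Fin 6`). -/
def H16 : Subgroup (Equiv.Perm (Fin 6)) :=
  Subgroup.closure
    {Equiv.swap 2 4 * Equiv.swap 4 3 * Equiv.swap 3 5,
     Equiv.swap 0 1 * Equiv.swap 4 5,
     Equiv.swap 0 3 * Equiv.swap 1 2 * Equiv.swap 4 5}

/-- The orbits of the conjugation action of `H16` on `FPFInv`. -/
def Orbits16 : Set (Set (Equiv.Perm (Fin 6))) :=
  (fun σ => {τ | ∃ g ∈ H16, g * σ * g⁻¹ = τ}) '' FPFInv

/-!
In a finite group, the conjugation orbit of `σ` under the subgroup generated by `S` is the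
smallest set containing `σ` that is closed under conjugation by the elements of `S` (inverses of
generators are positive powers of them). It is therefore obtained by repeatedly conjugating `{σ}`
by the three generators until the set stabilises, which for all 15 fixed-point-free involutions
is a finite computation.
-/

open Equiv Finset

section ConjOrbit

variable {G : Type*} [Group G]

def conjOrbit (H : Subgroup G) (σ : G) : Set G := {τ | ∃ g ∈ H, g * σ * g⁻¹ = τ}

lemma conj_mem_conjOrbit {H : Subgroup G} {σ τ g : G} (hτ : τ ∈ conjOrbit H σ) (hg : g ∈ H) :
    g * τ * g⁻¹ ∈ conjOrbit H σ := by
  obtain ⟨k, hk, rfl⟩ := hτ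
  exact ⟨g * k, mul_mem hg hk, by group⟩

lemma conjOrbit_closure_subset [Finite G] {S O : Set G} {σ : G} (hσ : σ ∈ O)
    (hO : ∀ s ∈ S, ∀ τ ∈ O, s * τ * s⁻¹ ∈ O) : conjOrbit (Subgroup.closure S) σ ⊆ O := by
  rintro _ ⟨g, hg, rfl⟩
  rw [← Subgroup.mem_toSubmonoid, Subgroup.closure_toSubmonoid_of_finite] at hg
  suffices ∀ τ ∈ O, g * τ * g⁻¹ ∈ O from this σ hσ
  induction hg using Submonoid.closure_induction with
  | mem s hs => exact hO s hs
  | one => simp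
  | mul x y _ _ hx hy =>
    intro τ hτ
    simpa only [mul_inv_rev, mul_assoc] using hx _ (hy τ hτ)

variable [DecidableEq G]

def conjStep (S O : Finset G) : Finset G :=
  O ∪ S.biUnion fun s => O.image fun τ => s * τ * s⁻¹

lemma self_mem_conjStep_iterate (S : Finset G) (σ : G) (n : ℕ) : σ ∈ (conjStep S)^[n] {σ} := by
  induction n with
  | zero => exact mem_singleton_self σ
  | succ n ih =>
    rw [Function.iterate_succ_apply']
    exact mem_union_left _ ih

lemma coe_conjStep_subset_conjOrbit {H : Subgroup G} {S O : Finset G} {σ : G}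
    (hS : (S : Set G) ⊆ H) (hO : (O : Set G) ⊆ conjOrbit H σ) :
    (conjStep S O : Set G) ⊆ conjOrbit H σ := by
  intro τ hτ
  simp only [conjStep, coe_union, coe_biUnion, coe_image, Set.mem_union, Set.mem_iUnion,
    Set.mem_image] at hτ
  obtain hτ | ⟨s, hs, τ, hτ, rfl⟩ := hτ
  · exact hO hτ
  · exact conj_mem_conjOrbit (hO hτ) (hS hs)

lemma coe_conjStep_iterate_subset_conjOrbit {H : Subgroup G} {S : Finset G}
    (hS : (S : Set G) ⊆ H) (σ : G) (n : ℕ) :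
    ((conjStep S)^[n] {σ} : Set G) ⊆ conjOrbit H σ := by
  induction n with
  | zero => simpa using ⟨1, H.one_mem, by group⟩
  | succ n ih =>
    rw [Function.iterate_succ_apply']
    exact coe_conjStep_subset_conjOrbit hS ih

theorem conjOrbit_closure_eq_conjStep_iterate [Finite G] {S : Finset G} {σ : G} {n : ℕ}
    (h : conjStep S ((conjStep S)^[n] {σ}) = (conjStep S)^[n] {σ}) :
    conjOrbit (Subgroup.closure ↑S) σ = ↑((conjStep S)^[n] {σ}) := by
  refine (conjOrbit_closure_subset (self_mem_conjStep_iterate S σ n) ?_).antisymm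
    (coe_conjStep_iterate_subset_conjOrbit Subgroup.subset_closure σ n)
  intro s hs τ hτ
  rw [mem_coe, ← h]
  exact mem_union_right _ (mem_biUnion.2 ⟨s, hs, mem_image_of_mem _ hτ⟩)

end ConjOrbit

lemma ncard_image_coe_finset {α : Type*} (T : Finset (Finset α)) :
    ((↑) '' (T : Set (Finset α)) : Set (Set α)).ncard = T.card := by
  rw [Set.ncard_image_of_injective _ coe_injective, Set.ncard_coe_finset]

lemma ncard_filter_ncard_image_coe_finset {α : Type*} (T : Finset (Finset α)) (k : ℕ) :
    {A ∈ ((↑) '' (T : Set (Finset α)) : Set (Set α)) | A.ncard = k}.ncard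
      = (T.val.map card).count k := by
  have : {A ∈ ((↑) '' (T : Set (Finset α)) : Set (Set α)) | A.ncard = k}
      = (↑) '' ((T.filter fun A => A.card = k : Finset (Finset α)) : Set (Finset α)) := by
    ext A
    simp only [Set.mem_ofPred_eq, Set.mem_image, coe_filter, mem_coe]
    constructor
    · rintro ⟨⟨B, hB, rfl⟩, hk⟩
      exact ⟨B, ⟨hB, by rwa [Set.ncard_coe_finset] at hk⟩, rfl⟩
    · rintro ⟨B, ⟨hB, hk⟩, rfl⟩
      exact ⟨⟨B, hB, rfl⟩, by rwa [Set.ncard_coe_finset]⟩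
  rw [this, ncard_image_coe_finset, Multiset.count_map, card_def, filter_val]
  simp [eq_comm]

def fpfInvolutions : Finset (Perm (Fin 6)) := univ.filter fun σ => σ * σ = 1 ∧ ∀ i, σ i ≠ i

lemma coe_fpfInvolutions : (fpfInvolutions : Set (Perm (Fin 6))) = FPFInv := by
  ext σ
  simp [fpfInvolutions, FPFInv]

lemma card_fpfInvolutions : fpfInvolutions.card = 15 := by decide +kernel

def gens16 : Finset (Perm (Fin 6)) :=
  {swap 2 4 * swap 4 3 * swap 3 5, swap 0 1 * swap 4 5, swap 0 3 * swap 1 2 * swap 4 5}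

lemma H16_eq_closure_gens16 : H16 = Subgroup.closure ↑gens16 := by
  simp [H16, gens16]

-- Three saturation steps suffice for every orbit: this is what `conjStep_orbit16` checks.
def orbit16 (σ : Perm (Fin 6)) : Finset (Perm (Fin 6)) := (conjStep gens16)^[3] {σ}

lemma conjStep_orbit16 : ∀ σ ∈ fpfInvolutions, conjStep gens16 (orbit16 σ) = orbit16 σ := by
  decide +kernel

lemma Orbits16_eq : Orbits16 =
    ((↑) : Finset (Perm (Fin 6)) → Set (Perm (Fin 6))) '' ↑(fpfInvolutions.image orbit16) := by
  rw [coe_image, ← Set.image_comp, Orbits16, ← coe_fpfInvolutions]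
  refine Set.image_congr fun σ hσ => ?_
  rw [Function.comp_apply, orbit16,
    ← conjOrbit_closure_eq_conjStep_iterate (conjStep_orbit16 σ hσ), H16_eq_closure_gens16]
  rfl

lemma orbit16_sizes : (fpfInvolutions.image orbit16).val.map card = {1, 4, 4, 6} := by
  decide +kernel

theorem stmt16 :
    FPFInv.ncard = 15 ∧
    Orbits16.ncard = 4 ∧
    {S ∈ Orbits16 | S.ncard = 1}.ncard = 1 ∧
    {S ∈ Orbits16 | S.ncard = 4}.ncard = 2 ∧
    {S ∈ Orbits16 | S.ncard = 6}.ncard = 1 := by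
  rw [← coe_fpfInvolutions, Set.ncard_coe_finset, card_fpfInvolutions, Orbits16_eq,
    ncard_image_coe_finset, card_def, ← Multiset.card_map card]
  simp only [ncard_filter_ncard_image_coe_finset, orbit16_sizes]
  decide
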